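/- Let L > 0, let 1 ≤ q ≤ m, and let α ∈ ℝ^m with α_i ≥ 0 for all i, α_i ≤ α_{i+1} for i = 1,…,q−1, and α_q ≤ α_j for j = q+1,…,m. Then the vector φ* defined by φ*_i = (1 + √(1 + 4Lα_i)) / (2L) satisfies the constraints φ_i ≤ φ_{i+1} for i = 1,…,q−1 and φ_q ≤ φ_j for j = q+1,…,m, and it minimizes H(φ) = Σ_{i=1}^m (−log φ_i + α_i/φ_i + Lφ_i) over the set of vectors φ ∈ ℝ^m with all entries positive that satisfy these constraints. -/

import Mathlib

/-!
Each summand of `H` depends on one coordinate only, and for `a ≥ 0` the function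
`x ↦ -log x + a/x + L x` on `x > 0` is minimised at the positive root `t` of `L t² = t + a`:
using `L t² = t + a`, its excess over the value at `t` is
`(x/t - 1 - log (x/t)) + a (x - t)² / (x t²) ≥ 0`. The root is increasing in `a`, so the
coordinatewise minimiser inherits the order constraints from `α` and is feasible.
-/

/-- The feasible set: positive entries, `φ_i ≤ φ_{i+1}` for `i = 1,…,q−1`,
and `φ_q ≤ φ_j` for `j = q+1,…,m`. -/
def Feas (q m : ℕ) (φ : ℕ → ℝ) : Prop :=
  (∀ i ∈ Finset.Icc 1 m, 0 < φ i) ∧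
  (∀ i, 1 ≤ i → i + 1 ≤ q → φ i ≤ φ (i + 1)) ∧
  (∀ j, q < j → j ≤ m → φ q ≤ φ j)

/-- The objective `H(φ) = Σ_{i=1}^m (−log φ_i + α_i/φ_i + L φ_i)`. -/
noncomputable def Hobj (m : ℕ) (L : ℝ) (α φ : ℕ → ℝ) : ℝ :=
  ∑ i ∈ Finset.Icc 1 m, (-(Real.log (φ i)) + α i / φ i + L * φ i)

noncomputable def quadPosRoot (L a : ℝ) : ℝ :=
  (1 + Real.sqrt (1 + 4 * L * a)) / (2 * L)

lemma quadPosRoot_pos {L : ℝ} (hL : 0 < L) (a : ℝ) : 0 < quadPosRoot L a := by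
  unfold quadPosRoot
  positivity

lemma quadPosRoot_mono {L : ℝ} (hL : 0 ≤ L) : Monotone (quadPosRoot L) := by
  intro a b hab
  unfold quadPosRoot
  gcongr

lemma mul_quadPosRoot_sq {L a : ℝ} (hL : 0 < L) (ha : 0 ≤ 1 + 4 * L * a) :
    L * quadPosRoot L a ^ 2 = quadPosRoot L a + a := by
  have hsq : Real.sqrt (1 + 4 * L * a) ^ 2 = 1 + 4 * L * a := Real.sq_sqrt ha
  unfold quadPosRoot
  generalize Real.sqrt (1 + 4 * L * a) = s at hsq ⊢
  field_simp
  linear_combination hsq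

lemma neg_log_add_div_add_mul_le {L a t x : ℝ} (ha : 0 ≤ a) (ht : 0 < t) (hx : 0 < x)
    (hroot : L * t ^ 2 = t + a) :
    -Real.log t + a / t + L * t ≤ -Real.log x + a / x + L * x := by
  have hlog : Real.log x - Real.log t ≤ x / t - 1 := by
    rw [← Real.log_div hx.ne' ht.ne']
    exact Real.log_le_sub_one_of_pos (div_pos hx ht)
  have hexcess :
      a / x + L * x - (a / t + L * t) - (x / t - 1) = a * (x - t) ^ 2 / (x * t ^ 2) := by
    field_simp
    linear_combination x * (x - t) * hroot
  have : 0 ≤ a * (x - t) ^ 2 / (x * t ^ 2) := by positivity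
  linarith

theorem stmt15_general (m q : ℕ) (L : ℝ) (hL : 0 < L)
    (α : ℕ → ℝ) (hα : ∀ i ∈ Finset.Icc 1 m, 0 ≤ α i)
    (hord : ∀ i, 1 ≤ i → i + 1 ≤ q → α i ≤ α (i + 1))
    (htail : ∀ j, q < j → j ≤ m → α q ≤ α j) :
    Feas q m (fun i => (1 + Real.sqrt (1 + 4 * L * α i)) / (2 * L)) ∧
    ∀ φ : ℕ → ℝ, Feas q m φ →
      Hobj m L α (fun i => (1 + Real.sqrt (1 + 4 * L * α i)) / (2 * L)) ≤ Hobj m L α φ := by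
  change Feas q m (fun i => quadPosRoot L (α i)) ∧
    ∀ φ, Feas q m φ → Hobj m L α (fun i => quadPosRoot L (α i)) ≤ Hobj m L α φ
  have hmono := quadPosRoot_mono hL.le
  refine ⟨⟨fun i _ => quadPosRoot_pos hL _, fun i hi hiq => hmono (hord i hi hiq),
    fun j hqj hjm => hmono (htail j hqj hjm)⟩, fun φ hφ => Finset.sum_le_sum fun i hi => ?_⟩
  have hai := hα i hi
  exact neg_log_add_div_add_mul_le hai (quadPosRoot_pos hL _) (hφ.1 i hi)
    (mul_quadPosRoot_sq hL (by positivity))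

theorem stmt15 (m q : ℕ) (hq : 1 ≤ q) (hqm : q ≤ m) (L : ℝ) (hL : 0 < L)
    (α : ℕ → ℝ) (hα : ∀ i ∈ Finset.Icc 1 m, 0 ≤ α i)
    (hord : ∀ i, 1 ≤ i → i + 1 ≤ q → α i ≤ α (i + 1))
    (htail : ∀ j, q < j → j ≤ m → α q ≤ α j) :
    Feas q m (fun i => (1 + Real.sqrt (1 + 4 * L * α i)) / (2 * L)) ∧
    ∀ φ : ℕ → ℝ, Feas q m φ →
      Hobj m L α (fun i => (1 + Real.sqrt (1 + 4 * L * α i)) / (2 * L)) ≤ Hobj m L α φ :=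
  stmt15_general m q L hL α hα hord htail
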